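/- Let X_1, ..., X_{n+1} be exchangeable random variables with values in a measurable space Ω, and let g: Ω → ℝ be a measurable function. Define σ_i = g(X_i) for i = 1, ..., n+1 and the p-value π = (1/(n+1)) · #{i ∈ {1,...,n+1} : σ_i ≤ σ_{n+1}}. Then for any α ∈ (0,1), P(π ≥ α) ≥ 1 - α. -/

import Mathlib

/-!
With `rank f j = #{i | f i ≤ f j}`, at most `c` indices have rank `< c`: the one among them with
the largest score has all of them below it. By exchangeability every index has the same
probability of rank `< α (n + 1)`, so `n + 1` times this probability for the last index is the
expected number of such indices, hence at most `α (n + 1)`.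
-/

open MeasureTheory Finset
open scoped ENNReal

namespace Conformal

variable {ι : Type*} [Fintype ι]

section Rank

variable {β : Type*} [LinearOrder β]

def rank (f : ι → β) (j : ι) : ℕ := #{i | f i ≤ f j}

lemma rank_comp_perm (f : ι → β) (e : Equiv.Perm ι) (j : ι) :
    rank (f ∘ e) j = rank f (e j) :=
  card_equiv e (by simp)

lemma card_rank_lt_le (f : ι → β) {c : ℝ} (hc : 0 ≤ c) :
    (#{j | (rank f j : ℝ) < c} : ℝ) ≤ c := by
  set T : Finset ι := {j | (rank f j : ℝ) < c}
  obtain hT | hT := T.eq_empty_or_nonempty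
  · simpa [hT] using hc
  obtain ⟨j, hjT, hj_max⟩ := T.exists_max_image f hT
  have hT_sub : T ⊆ ({i | f i ≤ f j} : Finset ι) := fun i hi => by simpa using hj_max i hi
  calc (#T : ℝ) ≤ rank f j := mod_cast card_le_card hT_sub
    _ ≤ c := (by simpa [T] using hjT : (rank f j : ℝ) < c).le

end Rank

section Measure

open Classical in
lemma sum_measure_le_of_card_le {γ : Type*} [MeasurableSpace γ] (μ : Measure γ)
    {A : ι → Set γ} (hA : ∀ k, MeasurableSet (A k))
    {C : ℝ≥0∞} (hC : ∀ x, (#{k | x ∈ A k} : ℝ≥0∞) ≤ C) :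
    ∑ k, μ (A k) ≤ C * μ Set.univ :=
  calc ∑ k, μ (A k) = ∫⁻ x, ∑ k, (A k).indicator 1 x ∂μ := by
        rw [lintegral_finsetSum _ fun k _ => measurable_one.indicator (hA k)]
        simp [lintegral_indicator_one (hA _)]
    _ = ∫⁻ x, (#{k | x ∈ A k} : ℝ≥0∞) ∂μ := by
        congr with x
        simp [Set.indicator_apply]
    _ ≤ ∫⁻ _, C ∂μ := lintegral_mono hC
    _ = C * μ Set.univ := lintegral_const C

variable {S : Type*} [MeasurableSpace S]

lemma measurableSet_rank_lt {g : S → ℝ} (hg : Measurable g) (j : ι) (c : ℝ) :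
    MeasurableSet {v : ι → S | (rank (g ∘ v) j : ℝ) < c} := by
  have h_rank : Measurable fun v : ι → S => rank (g ∘ v) j := by
    simp_rw [rank, card_filter]
    exact Finset.measurable_sum _ fun i _ => Measurable.ite
      (measurableSet_le (hg.comp (measurable_pi_apply i)) (hg.comp (measurable_pi_apply j)))
      measurable_const measurable_const
  exact h_rank (MeasurableSet.of_discrete (s := {k : ℕ | (k : ℝ) < c}))

lemma measure_rank_lt_le (ν : Measure (ι → S)) [IsProbabilityMeasure ν]
    (hν : ∀ e : Equiv.Perm ι, ν.map (fun v => v ∘ e) = ν)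
    {g : S → ℝ} (hg : Measurable g) (j : ι) {α : ℝ} (hα : 0 ≤ α) :
    ν {v | (rank (g ∘ v) j : ℝ) < α * Fintype.card ι} ≤ ENNReal.ofReal α := by
  set c := α * Fintype.card ι
  set A : ι → Set (ι → S) := fun k => {v | (rank (g ∘ v) k : ℝ) < c}
  have h_eq : ∀ k, ν (A k) = ν (A j) := fun k => by
    classical
    have h_pre : (fun v => v ∘ Equiv.swap k j) ⁻¹' A j = A k := by
      ext v
      simp [A, ← Function.comp_assoc, rank_comp_perm]
    rw [← h_pre, ← Measure.map_apply (by fun_prop) (measurableSet_rank_lt hg j c), hν]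
  have h_sum := sum_measure_le_of_card_le ν (measurableSet_rank_lt hg · c)
    (C := ENNReal.ofReal c) fun v => by
      rw [← ENNReal.ofReal_natCast]
      exact ENNReal.ofReal_le_ofReal (card_rank_lt_le (g ∘ v) (by positivity))
  rw [Finset.sum_congr rfl fun k _ => h_eq k, sum_const, card_univ, nsmul_eq_mul, measure_univ,
    mul_one, ENNReal.ofReal_mul hα, ENNReal.ofReal_natCast, mul_comm (ENNReal.ofReal α)] at h_sum
  have : Nonempty ι := ⟨j⟩
  have hN : (Fintype.card ι : ℝ≥0∞) ≠ 0 := Nat.cast_ne_zero.mpr Fintype.card_ne_zero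
  exact (ENNReal.mul_le_mul_iff_right hN (ENNReal.natCast_ne_top _)).mp h_sum

end Measure

end Conformal

open Conformal

/-- Validity of the conformal p-value: for exchangeable `X 0, ..., X n` with values in a
measurable space and a measurable score `g`, the p-value
`π = #{i : g (X i) ≤ g (X (last))} / (n+1)` satisfies `P(π ≥ α) ≥ 1 - α`. -/
theorem stmt1 {Ω S : Type*} [MeasurableSpace Ω] [MeasurableSpace S]
    (μ : Measure Ω) [IsProbabilityMeasure μ]
    (n : ℕ) (X : Fin (n + 1) → Ω → S) (hmeas : ∀ i, Measurable (X i))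
    (hexch : ∀ e : Equiv.Perm (Fin (n + 1)),
      Measure.map (fun ω (i : Fin (n + 1)) => X (e i) ω) μ =
        Measure.map (fun ω (i : Fin (n + 1)) => X i ω) μ)
    (g : S → ℝ) (hg : Measurable g)
    (α : ℝ) (hα : α ∈ Set.Ioo (0 : ℝ) 1) :
    ENNReal.ofReal (1 - α) ≤
      μ {ω | α ≤ ((Finset.univ.filter fun i =>
          g (X i ω) ≤ g (X (Fin.last n) ω)).card : ℝ) / (n + 1)} := by
  set Y : Ω → Fin (n + 1) → S := fun ω i => X i ω
  have hY : Measurable Y := measurable_pi_lambda _ hmeas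
  have := Measure.isProbabilityMeasure_map (μ := μ) hY.aemeasurable
  have h_exch : ∀ e : Equiv.Perm (Fin (n + 1)), (μ.map Y).map (fun v => v ∘ e) = μ.map Y :=
    fun e => by rw [Measure.map_map (by fun_prop) hY]; exact hexch e
  set A := {v : Fin (n + 1) → S |
    (rank (g ∘ v) (Fin.last n) : ℝ) < α * Fintype.card (Fin (n + 1))}
  have hA : MeasurableSet A := measurableSet_rank_lt hg _ _
  have h_event : {ω | α ≤ ((Finset.univ.filter fun i =>
      g (X i ω) ≤ g (X (Fin.last n) ω)).card : ℝ) / (n + 1)} = Y ⁻¹' Aᶜ := by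
    ext ω
    simp [A, Y, rank, le_div_iff₀ (by positivity : (0 : ℝ) < n + 1)]
  rw [h_event, ← Measure.map_apply hY hA.compl, prob_compl_eq_one_sub hA,
    ENNReal.ofReal_sub _ hα.1.le, ENNReal.ofReal_one]
  exact tsub_le_tsub_left (measure_rank_lt_le _ h_exch hg _ hα.1.le) 1
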